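/- arXiv:2202.09340 — 3 statements merged into one kernel-verified Lean document; each statement's English description precedes it below -/
import Mathlib

section
/- Let f : ℝ^d → ℝ be a bounded measurable function, σ > 0, and u(x) = E_{δ∼N(0,σ²I)}[f(x+δ)]. Then u is differentiable at every x ∈ ℝ^d and its gradient satisfies Stein's identity: ∇u(x) = E_{δ∼N(0,σ²I)}[(δ/σ²) · f(x+δ)]. -/
open MeasureTheory Real

/-- The Gaussian probability measure `N(0, σ²I)` on `ℝ^d`, defined via its density
with respect to the Lebesgue measure. -/
noncomputable def gaussianMeasure (d : ℕ) (σ : ℝ) :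
    Measure (EuclideanSpace ℝ (Fin d)) :=
  volume.withDensity fun δ =>
    ENNReal.ofReal ((2 * π * σ ^ 2) ^ (-(d : ℝ) / 2) * Real.exp (-‖δ‖ ^ 2 / (2 * σ ^ 2)))

/-!
Substituting `y = x + δ` writes `u` as a convolution
`u x = c ∫ f y · exp (-b ‖y - x‖²) dy` with `b = 1 / (2σ²)`, and the `x`-gradient of the kernel is
`2b (y - x) exp (-b ‖y - x‖²)`. Since `t e^{-b t²} ≤ b^{-1/2} e^{-b t² / 2}` and
`‖y - x₀‖² ≤ 2 ‖y - x‖² + 2` for `‖x - x₀‖ ≤ 1`, this gradient is bounded, uniformly for `x` in the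
unit ball around `x₀`, by `C' e^{-b ‖y - x₀‖² / 4}`, which is integrable. So one may differentiate
under the integral sign, and substituting back `y = x₀ + δ` gives Stein's identity.
-/

open InnerProductSpace Filter

lemma Real.mul_exp_neg_mul_sq_le {b : ℝ} (hb : 0 < b) (t : ℝ) :
    t * exp (-(b * t ^ 2)) ≤ (√b)⁻¹ * exp (-(b / 2 * t ^ 2)) := by
  have hsb : 0 < √b := sqrt_pos.mpr hb
  have key : √b * t ≤ exp (b / 2 * t ^ 2) := by
    have hsq : (√b * t) ^ 2 = b * t ^ 2 := by rw [mul_pow, sq_sqrt hb.le]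
    nlinarith [add_one_le_exp (b / 2 * t ^ 2), sq_nonneg (√b * t - 1)]
  calc t * exp (-(b * t ^ 2))
      = (√b)⁻¹ * (√b * t * exp (-(b / 2 * t ^ 2))) * exp (-(b / 2 * t ^ 2)) := by
        rw [show -(b * t ^ 2) = -(b / 2 * t ^ 2) + -(b / 2 * t ^ 2) by ring, exp_add]
        field_simp
    _ ≤ (√b)⁻¹ * (exp (b / 2 * t ^ 2) * exp (-(b / 2 * t ^ 2))) * exp (-(b / 2 * t ^ 2)) := by
        gcongr
    _ = (√b)⁻¹ * exp (-(b / 2 * t ^ 2)) := by rw [← exp_add, add_neg_cancel, exp_zero, mul_one]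

lemma exp_neg_mul_norm_sub_sq_le {E : Type*} [SeminormedAddCommGroup E] {c : ℝ} (hc : 0 ≤ c)
    {x x₀ : E} (hx : ‖x - x₀‖ ≤ 1) (y : E) :
    exp (-(c * ‖y - x‖ ^ 2)) ≤ exp c * exp (-(c / 2 * ‖y - x₀‖ ^ 2)) := by
  rw [← exp_add, exp_le_exp]
  have htri := norm_sub_le_norm_sub_add_norm_sub y x x₀
  have hsq : ‖y - x₀‖ ^ 2 ≤ 2 * ‖y - x‖ ^ 2 + 2 := by
    nlinarith [norm_nonneg (y - x₀), norm_nonneg (x - x₀), sq_nonneg (‖y - x‖ - ‖x - x₀‖)]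
  nlinarith [mul_le_mul_of_nonneg_left hsq hc]

section Gradient

variable {V : Type*} [NormedAddCommGroup V] [InnerProductSpace ℝ V] [CompleteSpace V]

lemma HasGradientAt.const_mul {F : V → ℝ} {F' x : V} (h : HasGradientAt F F' x) (c : ℝ) :
    HasGradientAt (fun y => c * F y) (c • F') x := by
  rw [hasGradientAt_iff_hasFDerivAt, map_smul]
  exact h.hasFDerivAt.const_mul c

lemma hasGradientAt_exp_neg_mul_norm_sub_sq (b : ℝ) (y x : V) :
    HasGradientAt (fun x => exp (-(b * ‖y - x‖ ^ 2)))
      ((2 * b * exp (-(b * ‖y - x‖ ^ 2))) • (y - x)) x := by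
  have hsub : HasFDerivAt (fun x : V => y - x) (-ContinuousLinearMap.id ℝ V) x :=
    (hasFDerivAt_id x).const_sub y
  have h := (((hasStrictFDerivAt_norm_sq (y - x)).hasFDerivAt.comp x hsub).const_mul
    (-b)).exp
  rw [hasGradientAt_iff_hasFDerivAt]
  refine (h.congr_fderiv ?_).congr_of_eventuallyEq (Eventually.of_forall fun x => ?_)
  · ext w
    simp only [Function.comp_apply, neg_mul, map_sub, ContinuousLinearMap.comp_neg,
      ContinuousLinearMap.comp_id, smul_neg, neg_smul, neg_neg, smul_apply,
      sub_apply, coe_innerSL_apply, nsmul_eq_mul, Nat.cast_ofNat, smul_eq_mul,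
      map_smul, toDual_apply_apply]
    ring
  · simp only [Function.comp_apply, neg_mul]

end Gradient

section FiniteDimensional

variable {V : Type*} [NormedAddCommGroup V] [InnerProductSpace ℝ V] [FiniteDimensional ℝ V]
  [MeasurableSpace V] [BorelSpace V]

lemma integrable_exp_neg_mul_norm_sq {b : ℝ} (hb : 0 < b) :
    Integrable fun v : V => exp (-(b * ‖v‖ ^ 2)) := by
  refine (GaussianFourier.integrable_cexp_neg_mul_sq_norm_add (V := V) (b := (b : ℂ))
    (by simpa using hb) 0 0).norm.congr (Eventually.of_forall fun v => ?_)
  simp [Complex.norm_exp, ← Complex.ofReal_pow]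

theorem hasGradientAt_integral_exp_neg_mul_norm_sub_sq_mul {b : ℝ} (hb : 0 < b) {f : V → ℝ}
    (hf : AEStronglyMeasurable f) {C : ℝ} (hC : ∀ y, |f y| ≤ C) (x₀ : V) :
    HasGradientAt (fun x => ∫ y, exp (-(b * ‖y - x‖ ^ 2)) * f y)
      (∫ y, (2 * b * exp (-(b * ‖y - x₀‖ ^ 2)) * f y) • (y - x₀)) x₀ := by
  have hkernel_cont : ∀ x : V, Continuous fun y : V => exp (-(b * ‖y - x‖ ^ 2)) := by
    intro x; fun_prop
  have hkernel_int : ∀ {c : ℝ}, 0 < c → Integrable fun y : V => exp (-(c * ‖y - x₀‖ ^ 2)) :=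
    fun hc => (integrable_exp_neg_mul_norm_sq hc).comp_sub_right x₀
  rw [hasGradientAt_iff_hasFDerivAt]
  refine HasFDerivAt.congr_fderiv ?_ ((toDual ℝ V).toLinearIsometry.integral_comp_comm _)
  refine hasFDerivAt_integral_of_dominated_of_fderiv_le (𝕜 := ℝ)
    (F' := fun x y => toDual ℝ V ((2 * b * exp (-(b * ‖y - x‖ ^ 2)) * f y) • (y - x)))
    (bound := fun y => 2 * b * C * ((√b)⁻¹ * exp (b / 2)) * exp (-(b / 4 * ‖y - x₀‖ ^ 2)))
    (Metric.ball_mem_nhds x₀ one_pos)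
    (Eventually.of_forall fun x => (hkernel_cont x).aestronglyMeasurable.mul hf) ?_ ?_ ?_ ?_ ?_
  · refine ((hkernel_int hb).mul_const C).mono' ((hkernel_cont x₀).aestronglyMeasurable.mul hf)
      (Eventually.of_forall fun y => ?_)
    rw [norm_mul, norm_of_nonneg (exp_nonneg _)]
    exact mul_le_mul_of_nonneg_left (hC y) (exp_nonneg _)
  · exact (toDual ℝ V).continuous.comp_aestronglyMeasurable
      ((((hkernel_cont x₀).aestronglyMeasurable.const_mul _).mul hf).smul
        (continuous_id.sub continuous_const).aestronglyMeasurable)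
  · refine Eventually.of_forall fun y x hx => ?_
    have hx' : ‖x - x₀‖ ≤ 1 := (mem_ball_iff_norm.mp hx).le
    have hC0 : 0 ≤ C := (abs_nonneg _).trans (hC y)
    calc ‖toDual ℝ V ((2 * b * exp (-(b * ‖y - x‖ ^ 2)) * f y) • (y - x))‖
        = 2 * b * |f y| * (‖y - x‖ * exp (-(b * ‖y - x‖ ^ 2))) := by
          rw [LinearIsometryEquiv.norm_map, norm_smul, norm_mul, norm_mul, norm_of_nonneg
            (exp_nonneg _), norm_of_nonneg (by positivity : (0 : ℝ) ≤ 2 * b), norm_eq_abs]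
          ring
      _ ≤ 2 * b * C * ((√b)⁻¹ * exp (-(b / 2 * ‖y - x‖ ^ 2))) := by
          gcongr 2 * b * ?_ * ?_
          · exact hC y
          · exact mul_exp_neg_mul_sq_le hb _
      _ ≤ 2 * b * C * ((√b)⁻¹ * (exp (b / 2) * exp (-(b / 2 / 2 * ‖y - x₀‖ ^ 2)))) := by
          gcongr _ * (_ * ?_)
          exact exp_neg_mul_norm_sub_sq_le (by positivity) hx' y
      _ = 2 * b * C * ((√b)⁻¹ * exp (b / 2)) * exp (-(b / 4 * ‖y - x₀‖ ^ 2)) := by ring_nf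
  · exact (hkernel_int (by positivity)).const_mul _
  · refine Eventually.of_forall fun y x _ => ?_
    refine ((hasGradientAt_exp_neg_mul_norm_sub_sq b y x).hasFDerivAt.mul_const
      (f y)).congr_fderiv ?_
    ext w
    simp only [map_smul, map_sub, smul_apply, sub_apply,
      toDual_apply_apply, smul_eq_mul]
    ring

end FiniteDimensional

lemma integral_gaussianMeasure_add {G : Type*} [NormedAddCommGroup G] [NormedSpace ℝ G]
    (d : ℕ) (σ : ℝ) (g : EuclideanSpace ℝ (Fin d) → G) (x : EuclideanSpace ℝ (Fin d)) :
    ∫ δ, g (x + δ) ∂gaussianMeasure d σ =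
      (2 * π * σ ^ 2) ^ (-(d : ℝ) / 2) • ∫ y, exp (-((2 * σ ^ 2)⁻¹ * ‖y - x‖ ^ 2)) • g y := by
  have hdens : Measurable fun δ : EuclideanSpace ℝ (Fin d) =>
      ENNReal.ofReal ((2 * π * σ ^ 2) ^ (-(d : ℝ) / 2) * exp (-‖δ‖ ^ 2 / (2 * σ ^ 2))) := by
    fun_prop
  rw [gaussianMeasure, integral_withDensity_eq_integral_toReal_smul hdens
    (Eventually.of_forall fun _ => ENNReal.ofReal_lt_top), ← integral_smul,
    ← integral_sub_right_eq_self _ x]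
  refine integral_congr_ae (Eventually.of_forall fun y => ?_)
  simp only [add_sub_cancel, smul_smul]
  rw [ENNReal.toReal_ofReal (by positivity),
    show -‖y - x‖ ^ 2 / (2 * σ ^ 2) = -((2 * σ ^ 2)⁻¹ * ‖y - x‖ ^ 2) by ring]

theorem stein_first_order_general (d : ℕ) (σ : ℝ) (hσ : 0 < σ)
    (f : EuclideanSpace ℝ (Fin d) → ℝ) (hf : Measurable f)
    (C : ℝ) (hbd : ∀ x, |f x| ≤ C)
    (u : EuclideanSpace ℝ (Fin d) → ℝ)
    (hu : ∀ x, u x = ∫ δ, f (x + δ) ∂(gaussianMeasure d σ)) :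
    ∀ x, DifferentiableAt ℝ u x ∧
      gradient u x = ∫ δ, (f (x + δ) / σ ^ 2) • δ ∂(gaussianMeasure d σ) := by
  intro x₀
  have hu' : u = fun x => (2 * π * σ ^ 2) ^ (-(d : ℝ) / 2) *
      ∫ y, exp (-((2 * σ ^ 2)⁻¹ * ‖y - x‖ ^ 2)) * f y := by
    funext x
    simp only [hu, integral_gaussianMeasure_add, smul_eq_mul]
  have H := (hasGradientAt_integral_exp_neg_mul_norm_sub_sq_mul
    (by positivity : 0 < (2 * σ ^ 2)⁻¹) hf.aestronglyMeasurable hbd x₀).const_mul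
    ((2 * π * σ ^ 2) ^ (-(d : ℝ) / 2))
  rw [hu']
  refine ⟨H.differentiableAt, H.gradient.trans ?_⟩
  have hshift : ∀ δ : EuclideanSpace ℝ (Fin d), (f (x₀ + δ) / σ ^ 2) • δ =
      (f (x₀ + δ) / σ ^ 2) • (x₀ + δ - x₀) := fun δ => by rw [add_sub_cancel_left]
  simp only [hshift, integral_gaussianMeasure_add (g := fun y => (f y / σ ^ 2) • (y - x₀)),
    smul_smul]
  congr 2
  funext y
  congr 1
  field_simp

theorem stein_first_order (d : ℕ) (hd : 0 < d) (σ : ℝ) (hσ : 0 < σ)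
    (f : EuclideanSpace ℝ (Fin d) → ℝ) (hf : Measurable f)
    (C : ℝ) (hbd : ∀ x, |f x| ≤ C)
    (u : EuclideanSpace ℝ (Fin d) → ℝ)
    (hu : ∀ x, u x = ∫ δ, f (x + δ) ∂(gaussianMeasure d σ)) :
    ∀ x, DifferentiableAt ℝ u x ∧
      gradient u x = ∫ δ, (f (x + δ) / σ ^ 2) • δ ∂(gaussianMeasure d σ) :=
  stein_first_order_general d σ hσ f hf C hbd u hu
end

section
/- Let f : ℝ^d → ℝ be a bounded measurable function with F = sup_{x∈ℝ^d} |f(x)|, σ > 0, and u(x) = E_{δ∼N(0,σ²I)}[f(x+δ)]. Then u is Lipschitz continuous with respect to the Euclidean (ℓ²) norm with Lipschitz constant (F/σ)·√(2/π), i.e., |u(x) − u(y)| ≤ (F/σ)·√(2/π)·‖x − y‖₂ for all x, y ∈ ℝ^d. -/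
/-!
Write `p` for the density of `N(0, σ²I)`. Translating the integration variable gives
`|u x - u y| ≤ F * ∫ |p δ - p (δ + (x - y))| dδ`. Since `p` is rotation invariant, the shift
`x - y` may be moved onto the first coordinate axis, where `p` is a product of one-dimensional
densities `φ` and the `L¹` distance becomes `∫ |φ t - φ (t + a)| dt` with `a = ‖x - y‖`.
As `φ` is even and decreasing in `|t|`, the difference `φ t - φ (t + a)` changes sign only at
`t = -a/2`, so this integral equals `2 ∫_{-a/2}^{a/2} φ ≤ 2 a φ 0 = a √(2/π) / σ`.
-/
open MeasureTheory Real

open scoped NNReal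
open ProbabilityTheory

section Translation

variable {E : Type*} [AddCommGroup E] [MeasurableSpace E] [MeasurableAdd E] {μ : Measure E}
  [μ.IsAddRightInvariant]

theorem abs_integral_mul_comp_add_sub_le {p f : E → ℝ} (hp : Integrable p μ)
    (hf : Measurable f) {F : ℝ} (hF : ∀ x, |f x| ≤ F) (x y : E) :
    |∫ δ, p δ * f (x + δ) ∂μ - ∫ δ, p δ * f (y + δ) ∂μ| ≤
      F * ∫ δ, |p δ - p (δ + (x - y))| ∂μ := by
  have hmul {q : E → ℝ} (hq : Integrable q μ) : Integrable (fun δ => q δ * f (x + δ)) μ :=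
    hq.mul_bdd (hf.comp (measurable_const_add x)).aestronglyMeasurable (ae_of_all _ fun _ => hF _)
  have hpy : ∫ δ, p δ * f (y + δ) ∂μ = ∫ δ, p (δ + (x - y)) * f (x + δ) ∂μ := by
    rw [← integral_add_right_eq_self _ (x - y)]
    congr 1 with δ
    rw [add_left_comm y δ, add_sub_cancel, add_comm δ x]
  have hdiff : Integrable (fun δ => |p δ - p (δ + (x - y))|) μ :=
    (hp.sub (hp.comp_add_right _)).abs
  rw [hpy, ← integral_sub (hmul hp) (hmul (hp.comp_add_right (x - y))), ← integral_const_mul]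
  refine (Real.norm_eq_abs _).symm.trans_le
    (norm_integral_le_of_norm_le (hdiff.const_mul F) (ae_of_all _ fun δ => ?_))
  rw [Real.norm_eq_abs, ← sub_mul, abs_mul, mul_comm F]
  exact mul_le_mul_of_nonneg_left (hF _) (abs_nonneg _)

end Translation

theorem integral_comp_norm_add_eq_of_norm_eq {E : Type*} [NormedAddCommGroup E]
    [InnerProductSpace ℝ E] [FiniteDimensional ℝ E] [MeasurableSpace E] [BorelSpace E]
    (Φ : ℝ → ℝ → ℝ) {v w : E} (h : ‖v‖ = ‖w‖) :
    ∫ x, Φ ‖x‖ ‖x + v‖ = ∫ x, Φ ‖x‖ ‖x + w‖ := by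
  obtain ⟨R, rfl⟩ : ∃ R : E ≃ₗᵢ[ℝ] E, R v = w := ⟨_, Submodule.reflection_sub h⟩
  calc ∫ x, Φ ‖x‖ ‖x + v‖ = ∫ x, Φ ‖R x‖ ‖R x + R v‖ := by
        simp only [← map_add, LinearIsometryEquiv.norm_map]
    _ = ∫ x, Φ ‖x‖ ‖x + R v‖ :=
        R.measurePreserving.integral_comp R.toHomeomorph.measurableEmbedding
          fun x => Φ ‖x‖ ‖x + R v‖

theorem integral_abs_sub_comp_add_le_of_abs_anti {g : ℝ → ℝ} (hg : Integrable g)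
    (hg_anti : ∀ s t, |s| ≤ |t| → g t ≤ g s) {a : ℝ} (ha : 0 ≤ a) :
    ∫ t, |g t - g (t + a)| ≤ 2 * a * g 0 := by
  obtain ⟨b, hb⟩ : ∃ b, b = a / 2 := ⟨_, rfl⟩
  have hga : Integrable (fun t => g (t + a)) := hg.comp_add_right a
  have hshift : ∀ s, ∫ t in (· + a) ⁻¹' s, g (t + a) = ∫ t in s, g t :=
    (measurePreserving_add_right volume a).setIntegral_preimage_emb
      (Homeomorph.addRight a).measurableEmbedding g
  have hleft : ∫ t in Set.Iio (b - a), |g t - g (t + a)| = ∫ t in Set.Ico (b - a) b, g t := by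
    calc ∫ t in Set.Iio (b - a), |g t - g (t + a)|
        = ∫ t in Set.Iio (b - a), (g (t + a) - g t) := by
          refine setIntegral_congr_fun measurableSet_Iio fun t (ht : t < b - a) => ?_
          have : |t + a| ≤ |t| := by
            rw [abs_of_neg (by linarith : t < 0)]
            exact abs_le.2 ⟨by linarith, by linarith⟩
          rw [abs_sub_comm, abs_of_nonneg (sub_nonneg.2 (hg_anti _ _ this))]
      _ = (∫ t in Set.Iio b, g t) - ∫ t in Set.Iio (b - a), g t := by
          rw [integral_sub hga.integrableOn hg.integrableOn, ← hshift (Set.Iio b),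
            Set.preimage_add_const_Iio]
      _ = _ := intervalIntegral.integral_Iio_sub_Iio hg.integrableOn (by linarith)
  have hright : ∫ t in Set.Ici (b - a), |g t - g (t + a)| = ∫ t in Set.Ico (b - a) b, g t := by
    calc ∫ t in Set.Ici (b - a), |g t - g (t + a)|
        = ∫ t in Set.Ici (b - a), (g t - g (t + a)) := by
          refine setIntegral_congr_fun measurableSet_Ici fun t (ht : b - a ≤ t) => ?_
          have : |t| ≤ |t + a| := by
            rw [abs_of_nonneg (by linarith : 0 ≤ t + a)]
            exact abs_le.2 ⟨by linarith, by linarith⟩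
          rw [abs_of_nonneg (sub_nonneg.2 (hg_anti _ _ this))]
      _ = (∫ t in Set.Ici (b - a), g t) - ∫ t in Set.Ici b, g t := by
          rw [integral_sub hg.integrableOn hga.integrableOn, ← hshift (Set.Ici b),
            Set.preimage_add_const_Ici]
      _ = _ := intervalIntegral.integral_Ici_sub_Ici hg.integrableOn (by linarith)
  have hmid : ∫ t in Set.Ico (b - a) b, g t ≤ a * g 0 := by
    calc ∫ t in Set.Ico (b - a) b, g t ≤ ∫ _ in Set.Ico (b - a) b, g 0 :=
          setIntegral_mono_on hg.integrableOn (integrableOn_const (by simp)) measurableSet_Ico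
            fun t _ => hg_anti 0 t (by simp)
      _ = a * g 0 := by simp [Real.volume_real_Ico_of_le (by linarith : b - a ≤ b)]
  have hint : Integrable (fun t => |g t - g (t + a)|) := (hg.sub hga).abs
  rw [← intervalIntegral.integral_Iio_add_Ici hint.integrableOn hint.integrableOn, hleft, hright]
  linarith

theorem integral_abs_sub_gaussianPDFReal_add_le (v : ℝ≥0) {a : ℝ} (ha : 0 ≤ a) :
    ∫ t, |gaussianPDFReal 0 v t - gaussianPDFReal 0 v (t + a)| ≤
      2 * a * (√(2 * π * v))⁻¹ := by
  refine (integral_abs_sub_comp_add_le_of_abs_anti (integrable_gaussianPDFReal 0 v)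
    (fun s t hst => ?_) ha).trans_eq (by simp [gaussianPDFReal])
  simp only [gaussianPDFReal, sub_zero]
  gcongr _ * rexp (-?_ / _)
  exact sq_le_sq.2 hst

noncomputable def gaussianDensity (d : ℕ) (σ : ℝ) (δ : EuclideanSpace ℝ (Fin d)) : ℝ :=
  (2 * π * σ ^ 2) ^ (-(d : ℝ) / 2) * Real.exp (-‖δ‖ ^ 2 / (2 * σ ^ 2))

theorem integral_gaussianMeasure (d : ℕ) (σ : ℝ) (g : EuclideanSpace ℝ (Fin d) → ℝ) :
    ∫ δ, g δ ∂gaussianMeasure d σ = ∫ δ, gaussianDensity d σ δ * g δ := by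
  rw [gaussianMeasure, integral_withDensity_eq_integral_toReal_smul (by fun_prop)
    (ae_of_all _ fun _ => ENNReal.ofReal_lt_top)]
  congr with δ
  rw [ENNReal.toReal_ofReal (by positivity), smul_eq_mul, gaussianDensity]

theorem gaussianDensity_eq_prod (d : ℕ) (σ : ℝ) (δ : EuclideanSpace ℝ (Fin d)) :
    gaussianDensity d σ δ = ∏ i, gaussianPDFReal 0 (σ ^ 2).toNNReal (δ i) := by
  have hc : 0 ≤ 2 * π * σ ^ 2 := by positivity
  simp only [gaussianPDFReal, Real.coe_toNNReal _ (sq_nonneg σ), sub_zero,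
    Finset.prod_mul_distrib, Finset.prod_const, Finset.card_univ, Fintype.card_fin,
    ← Real.exp_sum, ← Finset.sum_div, Finset.sum_neg_distrib, EuclideanSpace.real_norm_sq_eq,
    gaussianDensity]
  rw [Real.sqrt_eq_rpow, ← Real.rpow_neg hc, ← Real.rpow_mul_natCast hc]
  ring_nf

theorem integrable_gaussianDensity (d : ℕ) (σ : ℝ) : Integrable (gaussianDensity d σ) := by
  rw [← (PiLp.volume_preserving_toLp (Fin d)).integrable_comp_emb
    (MeasurableEquiv.toLp 2 (Fin d → ℝ)).measurableEmbedding]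
  simp only [Function.comp_def, gaussianDensity_eq_prod]
  exact Integrable.fintype_prod fun _ => integrable_gaussianPDFReal 0 _

theorem integral_abs_sub_gaussianDensity_add_single (n : ℕ) {σ : ℝ} (hσ : σ ≠ 0)
    (a : ℝ) :
    ∫ δ, |gaussianDensity (n + 1) σ δ -
        gaussianDensity (n + 1) σ (δ + EuclideanSpace.single 0 a)| =
      ∫ t, |gaussianPDFReal 0 (σ ^ 2).toNNReal t -
        gaussianPDFReal 0 (σ ^ 2).toNNReal (t + a)| := by
  set φ := gaussianPDFReal 0 (σ ^ 2).toNNReal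
  have hv : (σ ^ 2).toNNReal ≠ 0 := by simpa using hσ
  have hφ (t : ℝ) : 0 ≤ φ t := gaussianPDFReal_nonneg 0 _ t
  rw [← (PiLp.volume_preserving_toLp (Fin (n + 1))).integral_comp
    (MeasurableEquiv.toLp 2 (Fin (n + 1) → ℝ)).measurableEmbedding]
  have hfactor (p : Fin (n + 1) → ℝ) :
      |gaussianDensity (n + 1) σ (WithLp.toLp 2 p) -
        gaussianDensity (n + 1) σ (WithLp.toLp 2 p + EuclideanSpace.single 0 a)| =
      ∏ i, (Fin.cons (fun t => |φ t - φ (t + a)|) (fun _ => φ) : Fin (n + 1) → ℝ → ℝ) i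
        (p i) := by
    simp only [gaussianDensity_eq_prod, Fin.prod_univ_succ, Fin.cons_zero, Fin.cons_succ,
      PiLp.add_apply, PiLp.single_apply, Fin.succ_ne_zero, if_true, if_false, add_zero]
    rw [← sub_mul, abs_mul, abs_of_nonneg (Finset.prod_nonneg fun i _ => hφ _)]
  simp_rw [hfactor]
  rw [integral_fintype_prod_volume_eq_prod, Fin.prod_univ_succ]
  simp only [Fin.cons_zero, Fin.cons_succ, integral_gaussianPDFReal_eq_one 0 hv, φ,
    Finset.prod_const_one, mul_one]

theorem integral_abs_sub_gaussianDensity_add_le (d : ℕ) {σ : ℝ} (hσ : 0 < σ)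
    (h : EuclideanSpace ℝ (Fin d)) :
    ∫ δ, |gaussianDensity d σ δ - gaussianDensity d σ (δ + h)| ≤
      √(2 / π) / σ * ‖h‖ := by
  cases d with
  | zero => simp [Subsingleton.elim h 0]
  | succ n =>
    -- `gaussianDensity (n + 1) σ δ = ψ ‖δ‖`, so the rotation lemma applies
    set ψ : ℝ → ℝ := fun r =>
      (2 * π * σ ^ 2) ^ (-((n + 1 : ℕ) : ℝ) / 2) * rexp (-r ^ 2 / (2 * σ ^ 2))
    have hrot : ∫ δ, |gaussianDensity (n + 1) σ δ - gaussianDensity (n + 1) σ (δ + h)| =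
        ∫ δ, |gaussianDensity (n + 1) σ δ -
          gaussianDensity (n + 1) σ (δ + EuclideanSpace.single 0 ‖h‖)| :=
      integral_comp_norm_add_eq_of_norm_eq (fun r s => |ψ r - ψ s|) (by simp)
    rw [hrot, integral_abs_sub_gaussianDensity_add_single n hσ.ne']
    refine (integral_abs_sub_gaussianPDFReal_add_le _ (norm_nonneg h)).trans_eq ?_
    rw [Real.coe_toNNReal _ (sq_nonneg σ), Real.sqrt_mul' _ (sq_nonneg σ), Real.sqrt_sq hσ.le,
      Real.sqrt_div' _ pi_pos.le, Real.sqrt_mul' _ pi_pos.le]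
    field_simp
    rw [Real.sq_sqrt zero_le_two]
    ring

theorem gaussian_smoothing_lipschitz_general (d : ℕ) (σ : ℝ) (hσ : 0 < σ)
    (f : EuclideanSpace ℝ (Fin d) → ℝ) (hf : Measurable f)
    (F : ℝ) (hF : ∀ x, |f x| ≤ F)
    (u : EuclideanSpace ℝ (Fin d) → ℝ)
    (hu : ∀ x, u x = ∫ δ, f (x + δ) ∂(gaussianMeasure d σ)) :
    ∀ x y, |u x - u y| ≤ F / σ * Real.sqrt (2 / π) * ‖x - y‖ := by
  intro x y
  have hF₀ : 0 ≤ F := (abs_nonneg _).trans (hF 0)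
  rw [hu, hu, integral_gaussianMeasure, integral_gaussianMeasure]
  calc _ ≤ F * ∫ δ, |gaussianDensity d σ δ - gaussianDensity d σ (δ + (x - y))| :=
        abs_integral_mul_comp_add_sub_le (integrable_gaussianDensity d σ) hf hF x y
    _ ≤ F * (√(2 / π) / σ * ‖x - y‖) :=
        mul_le_mul_of_nonneg_left (integral_abs_sub_gaussianDensity_add_le d hσ _) hF₀
    _ = F / σ * √(2 / π) * ‖x - y‖ := by ring

theorem gaussian_smoothing_lipschitz (d : ℕ) (hd : 0 < d) (σ : ℝ) (hσ : 0 < σ)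
    (f : EuclideanSpace ℝ (Fin d) → ℝ) (hf : Measurable f)
    (F : ℝ) (hF : ∀ x, |f x| ≤ F)
    (u : EuclideanSpace ℝ (Fin d) → ℝ)
    (hu : ∀ x, u x = ∫ δ, f (x + δ) ∂(gaussianMeasure d σ)) :
    ∀ x y, |u x - u y| ≤ F / σ * Real.sqrt (2 / π) * ‖x - y‖ :=
  gaussian_smoothing_lipschitz_general d σ hσ f hf F hF u hu
end

section
/- Let f : ℝ^d → ℝ be a bounded measurable function, σ > 0, and u(x) = E_{δ∼N(0,σ²I)}[f(x+δ)]. For any indices i ≠ j in {1,…,d}, the mixed second-order partial derivative of u satisfies ∂²u/∂x_i∂x_j (x) = E_{δ∼N(0,σ²I)}[(δ_i δ_j / σ⁴) · f(x+δ)]. -/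
/-!
Write `u y = c ∫ f z * k (z - y) dz` with the unnormalised kernel `k v = exp (-‖v‖² / (2σ²))`
and the constant `c = (2πσ²)^(-d/2)` absorbed into `f`; then every derivative of `u` falls on
`k`. Differentiating under the integral is legitimate because `k` and its first two derivatives
are polynomials times Gaussians, and the translates of such a function by the unit ball are
dominated by one integrable Gaussian, while `f` only has to be bounded. Two differentiations in
directions `e`, `e'` produce the kernel `(⟪v, e⟫ ⟪v, e'⟫ / σ⁴ - ⟪e, e'⟫ / σ²) k v`, whose
second term vanishes for distinct coordinate directions.
-/

open MeasureTheory Real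
open scoped RealInnerProductSpace

theorem one_add_sq_mul_exp_neg_mul_sq_le {b : ℝ} (hb : 0 < b) (t : ℝ) :
    (1 + t) ^ 2 * exp (-b * t ^ 2) ≤ (2 + 4 / b) * exp (-(b / 2) * t ^ 2) := by
  have hsplit : exp (-b * t ^ 2) = exp (-(b / 2) * t ^ 2) * exp (-(b / 2) * t ^ 2) := by
    rw [← exp_add]; ring_nf
  have hpoly : t ^ 2 * exp (-(b / 2) * t ^ 2) ≤ 2 / b := by
    have h := add_one_le_exp (b / 2 * t ^ 2)
    rw [le_div_iff₀ hb, mul_comm, ← mul_assoc, neg_mul, exp_neg, ← div_eq_mul_inv,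
      div_le_iff₀ (exp_pos _)]
    linarith
  have hexp : exp (-(b / 2) * t ^ 2) ≤ 1 := exp_le_one_iff.2 (by nlinarith [sq_nonneg t])
  set E := exp (-(b / 2) * t ^ 2)
  have hE : 0 < E := exp_pos _
  calc (1 + t) ^ 2 * exp (-b * t ^ 2) ≤ (2 + 2 * t ^ 2) * (E * E) := by
        rw [hsplit]; gcongr; nlinarith [sq_nonneg (1 - t)]
    _ = 2 * E * E + 2 * (t ^ 2 * E) * E := by ring
    _ ≤ 2 * 1 * E + 2 * (2 / b) * E := by gcongr
    _ = (2 + 4 / b) * E := by ring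

section GaussianDecay

variable {V : Type*} [NormedAddCommGroup V]

def HasGaussianDecay {F : Type*} [Norm F] (g : V → F) : Prop :=
  ∃ a > 0, ∃ M, ∀ v, ‖g v‖ ≤ M * exp (-a * ‖v‖ ^ 2)

theorem exp_neg_mul_sq_norm_add_le {a : ℝ} (ha : 0 ≤ a) (v : V) {w : V} (hw : ‖w‖ ≤ 1) :
    exp (-a * ‖v + w‖ ^ 2) ≤ exp a * exp (-(a / 2) * ‖v‖ ^ 2) := by
  rw [← exp_add, exp_le_exp]
  have hv : ‖v‖ ≤ ‖v + w‖ + 1 := by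
    simpa using (norm_sub_le (v + w) w).trans (add_le_add_right hw _)
  have : ‖v‖ ^ 2 ≤ 2 * ‖v + w‖ ^ 2 + 2 := by
    nlinarith [norm_nonneg v, norm_nonneg (v + w), sq_nonneg (‖v + w‖ - 1)]
  nlinarith

theorem HasGaussianDecay.of_norm_le {F : Type*} [Norm F] {g : V → F} {b M : ℝ} (hb : 0 < b)
    (hM : 0 ≤ M) (hg : ∀ v, ‖g v‖ ≤ M * (1 + ‖v‖) ^ 2 * exp (-b * ‖v‖ ^ 2)) :
    HasGaussianDecay g :=
  ⟨b / 2, by positivity, M * (2 + 4 / b), fun v => (hg v).trans <| by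
    rw [mul_assoc, mul_assoc]
    exact mul_le_mul_of_nonneg_left (one_add_sq_mul_exp_neg_mul_sq_le hb ‖v‖) hM⟩

theorem HasGaussianDecay.exists_bound_add {F : Type*} [SeminormedAddGroup F] {g : V → F}
    (hg : HasGaussianDecay g) :
    ∃ a > 0, ∃ M, ∀ v w, ‖w‖ ≤ 1 → ‖g (v + w)‖ ≤ M * exp (-a * ‖v‖ ^ 2) := by
  obtain ⟨a, ha, M, hM⟩ := hg
  have hM0 : 0 ≤ M := by simpa using (norm_nonneg _).trans (hM 0)
  refine ⟨a / 2, by positivity, M * exp a, fun v w hw => (hM _).trans ?_⟩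
  rw [mul_assoc]
  exact mul_le_mul_of_nonneg_left (exp_neg_mul_sq_norm_add_le ha.le v hw) hM0

variable [InnerProductSpace ℝ V] [FiniteDimensional ℝ V] [MeasurableSpace V] [BorelSpace V]

theorem integrable_exp_neg_mul_sq_norm {a : ℝ} (ha : 0 < a) :
    Integrable (fun v : V => exp (-a * ‖v‖ ^ 2)) := by
  refine (GaussianFourier.integrable_cexp_neg_mul_sq_norm_add (V := V) (b := (a : ℂ))
    (by simpa using ha) 0 0).norm.congr (Filter.Eventually.of_forall fun v => ?_)
  simp [Complex.norm_exp, ← Complex.ofReal_pow]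

theorem HasGaussianDecay.integrable {F : Type*} [NormedAddCommGroup F] {g : V → F}
    (hg : HasGaussianDecay g) (hmeas : AEStronglyMeasurable g) : Integrable g := by
  obtain ⟨a, ha, M, hM⟩ := hg
  exact ((integrable_exp_neg_mul_sq_norm ha).const_mul M).mono' hmeas
    (Filter.Eventually.of_forall hM)

end GaussianDecay

section KernelSmoothing

variable {V : Type*} [NormedAddCommGroup V] [InnerProductSpace ℝ V] [FiniteDimensional ℝ V]
  [MeasurableSpace V] [BorelSpace V] {f : V → ℝ} {C : ℝ}

theorem integrable_smul_comp_sub {F : Type*} [NormedAddCommGroup F] [NormedSpace ℝ F]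
    {g : V → F} (hf : AEStronglyMeasurable f) (hfC : ∀ z, |f z| ≤ C) (hg : HasGaussianDecay g)
    (hgc : Continuous g) (y : V) :
    Integrable (fun z => f z • g (z - y)) :=
  ((hg.integrable hgc.aestronglyMeasurable).comp_sub_right y).bdd_smul C hf (ae_of_all _ hfC)

variable {K : V → ℝ} {K' : V → V →L[ℝ] ℝ}

theorem hasFDerivAt_integral_mul_comp_sub (hf : AEStronglyMeasurable f) (hfC : ∀ z, |f z| ≤ C)
    (hK : ∀ v, HasFDerivAt K (K' v) v) (hK'c : Continuous K')
    (hKd : HasGaussianDecay K) (hK'd : HasGaussianDecay K') (y₀ : V) :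
    HasFDerivAt (fun y => ∫ z, f z * K (z - y)) (-∫ z, f z • K' (z - y₀)) y₀ := by
  have hKc : Continuous K := continuous_iff_continuousAt.2 fun v => (hK v).continuousAt
  obtain ⟨a, ha, M, hM⟩ := hK'd.exists_bound_add
  have hC : 0 ≤ C := (abs_nonneg _).trans (hfC 0)
  rw [← integral_neg]
  refine hasFDerivAt_integral_of_dominated_of_fderiv_le
    (F := fun y z => f z * K (z - y)) (F' := fun y z => -(f z • K' (z - y)))
    (bound := fun z => C * (M * exp (-a * ‖z - y₀‖ ^ 2))) (Metric.ball_mem_nhds y₀ one_pos)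
    (Filter.Eventually.of_forall fun y => ?_) ?_ ?_ ?_ ?_ ?_
  · exact hf.mul (hKc.comp (continuous_sub_right y)).aestronglyMeasurable
  · exact integrable_smul_comp_sub hf hfC hKd hKc y₀
  · exact (integrable_smul_comp_sub hf hfC hK'd hK'c y₀).neg.aestronglyMeasurable
  · refine ae_of_all _ fun z y hy => ?_
    have hw : ‖y₀ - y‖ ≤ 1 := by rw [norm_sub_rev]; exact (mem_ball_iff_norm.1 hy).le
    have hK'zy := hM (z - y₀) (y₀ - y) hw
    rw [sub_add_sub_cancel] at hK'zy
    rw [norm_neg, norm_smul, Real.norm_eq_abs]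
    exact mul_le_mul (hfC z) hK'zy (norm_nonneg _) hC
  · exact (((integrable_exp_neg_mul_sq_norm ha).comp_sub_right y₀).const_mul M).const_mul C
  · refine ae_of_all _ fun z y _ => ?_
    refine (((hK (z - y)).comp y ((hasFDerivAt_id y).const_sub z)).const_mul (f z)).congr_fderiv ?_
    ext; simp

theorem fderiv_integral_mul_comp_sub_apply (hf : AEStronglyMeasurable f) (hfC : ∀ z, |f z| ≤ C)
    (hK : ∀ v, HasFDerivAt K (K' v) v) (hK'c : Continuous K')
    (hKd : HasGaussianDecay K) (hK'd : HasGaussianDecay K') (y e : V) :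
    fderiv ℝ (fun y => ∫ z, f z * K (z - y)) y e = ∫ z, f z * -K' (z - y) e := by
  rw [(hasFDerivAt_integral_mul_comp_sub hf hfC hK hK'c hKd hK'd y).fderiv, neg_apply,
    ContinuousLinearMap.integral_apply (integrable_smul_comp_sub hf hfC hK'd hK'c y),
    ← integral_neg]
  simp

end KernelSmoothing

section GaussianKernel

variable {V : Type*} [NormedAddCommGroup V] {σ : ℝ}

noncomputable def gaussianKernel (σ : ℝ) (v : V) : ℝ := exp (-‖v‖ ^ 2 / (2 * σ ^ 2))

theorem gaussianKernel_eq_exp_neg_mul (σ : ℝ) (v : V) :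
    gaussianKernel σ v = exp (-(2 * σ ^ 2)⁻¹ * ‖v‖ ^ 2) := by
  rw [gaussianKernel, neg_div, div_eq_inv_mul, neg_mul]

theorem continuous_gaussianKernel (σ : ℝ) : Continuous (gaussianKernel σ : V → ℝ) := by
  unfold gaussianKernel; fun_prop

theorem hasGaussianDecay_gaussianKernel (hσ : σ ≠ 0) :
    HasGaussianDecay (gaussianKernel σ : V → ℝ) :=
  ⟨(2 * σ ^ 2)⁻¹, by positivity, 1, fun v => by
    rw [gaussianKernel_eq_exp_neg_mul, Real.norm_of_nonneg (exp_nonneg _), one_mul]⟩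

theorem HasGaussianDecay.of_norm_le_mul_gaussianKernel {F : Type*} [Norm F] {g : V → F} {M : ℝ}
    (hσ : σ ≠ 0) (hM : 0 ≤ M) (hg : ∀ v, ‖g v‖ ≤ M * (1 + ‖v‖) ^ 2 * gaussianKernel σ v) :
    HasGaussianDecay g :=
  .of_norm_le (b := (2 * σ ^ 2)⁻¹) (by positivity) hM
    (by simpa only [gaussianKernel_eq_exp_neg_mul] using hg)

variable [InnerProductSpace ℝ V]

theorem hasFDerivAt_gaussianKernel (v : V) :
    HasFDerivAt (gaussianKernel σ) (-(gaussianKernel σ v / σ ^ 2) • innerSL ℝ v) v := by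
  simp_rw [funext (gaussianKernel_eq_exp_neg_mul σ)]
  refine (((hasStrictFDerivAt_norm_sq v).hasFDerivAt.const_mul _).exp).congr_fderiv ?_
  ext w
  simp only [mul_inv_rev, neg_mul, neg_smul, smul_neg, neg_apply, smul_apply, coe_innerSL_apply,
    nsmul_eq_mul, Nat.cast_ofNat, smul_eq_mul, neg_inj]
  ring

theorem hasFDerivAt_inner_mul_gaussianKernel (e v : V) :
    HasFDerivAt (fun v => ⟪v, e⟫ / σ ^ 2 * gaussianKernel σ v)
      ((gaussianKernel σ v / σ ^ 2) • (innerSL ℝ e - (⟪v, e⟫ / σ ^ 2) • innerSL ℝ v)) v := by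
  have hinner : (fun v => ⟪v, e⟫) = innerSL ℝ e := by
    ext w; simp [real_inner_comm]
  have hfun : (fun v => ⟪v, e⟫ / σ ^ 2 * gaussianKernel σ v) =
      fun v => (σ ^ 2)⁻¹ * innerSL ℝ e v * gaussianKernel σ v := by
    rw [← hinner]; ext w; ring
  rw [hfun]
  refine (((innerSL ℝ e).hasFDerivAt.const_mul (σ ^ 2)⁻¹).mul
    (hasFDerivAt_gaussianKernel v)).congr_fderiv ?_
  ext w
  simp only [add_apply, smul_apply, sub_apply, innerSL_apply_apply, smul_eq_mul]
  rw [real_inner_comm v e]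
  ring

theorem hasGaussianDecay_fderiv_gaussianKernel (hσ : σ ≠ 0) :
    HasGaussianDecay fun v : V => -(gaussianKernel σ v / σ ^ 2) • innerSL ℝ v := by
  refine .of_norm_le_mul_gaussianKernel hσ (M := (σ ^ 2)⁻¹) (by positivity) fun v => ?_
  have hk : 0 ≤ gaussianKernel σ v := exp_nonneg _
  rw [norm_smul, innerSL_apply_norm, norm_neg, Real.norm_of_nonneg (by positivity)]
  have : ‖v‖ ≤ (1 + ‖v‖) ^ 2 := by nlinarith [norm_nonneg v]
  calc gaussianKernel σ v / σ ^ 2 * ‖v‖ = (σ ^ 2)⁻¹ * ‖v‖ * gaussianKernel σ v := by ring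
    _ ≤ (σ ^ 2)⁻¹ * (1 + ‖v‖) ^ 2 * gaussianKernel σ v := by gcongr

theorem hasGaussianDecay_inner_mul_gaussianKernel (hσ : σ ≠ 0) (e : V) :
    HasGaussianDecay fun v : V => ⟪v, e⟫ / σ ^ 2 * gaussianKernel σ v := by
  refine .of_norm_le_mul_gaussianKernel hσ (M := ‖e‖ / σ ^ 2) (by positivity) fun v => ?_
  have hk : 0 ≤ gaussianKernel σ v := exp_nonneg _
  rw [norm_mul, norm_div, Real.norm_of_nonneg hk, Real.norm_of_nonneg (sq_nonneg σ)]
  have : ‖v‖ ≤ (1 + ‖v‖) ^ 2 := by nlinarith [norm_nonneg v]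
  calc ‖⟪v, e⟫‖ / σ ^ 2 * gaussianKernel σ v ≤ ‖v‖ * ‖e‖ / σ ^ 2 * gaussianKernel σ v := by
        gcongr; exact norm_inner_le_norm v e
    _ ≤ (1 + ‖v‖) ^ 2 * ‖e‖ / σ ^ 2 * gaussianKernel σ v := by gcongr
    _ = ‖e‖ / σ ^ 2 * (1 + ‖v‖) ^ 2 * gaussianKernel σ v := by ring

theorem hasGaussianDecay_fderiv_inner_mul_gaussianKernel (hσ : σ ≠ 0) (e : V) :
    HasGaussianDecay fun v : V =>
      (gaussianKernel σ v / σ ^ 2) • (innerSL ℝ e - (⟪v, e⟫ / σ ^ 2) • innerSL ℝ v) := by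
  refine .of_norm_le_mul_gaussianKernel hσ (M := ‖e‖ / σ ^ 2 * (1 + (σ ^ 2)⁻¹)) (by positivity)
    fun v => ?_
  have hk : 0 ≤ gaussianKernel σ v := exp_nonneg _
  have hσ2 : 0 < σ ^ 2 := by positivity
  have hsub : ‖innerSL ℝ e - (⟪v, e⟫ / σ ^ 2) • innerSL ℝ v‖ ≤ ‖e‖ + ‖v‖ * ‖e‖ / σ ^ 2 * ‖v‖ := by
    refine (norm_sub_le _ _).trans ?_
    rw [norm_smul, innerSL_apply_norm, innerSL_apply_norm, norm_div,
      Real.norm_of_nonneg hσ2.le]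
    gcongr
    exact norm_inner_le_norm v e
  rw [norm_smul, Real.norm_of_nonneg (by positivity)]
  have h1 : 1 ≤ (1 + ‖v‖) ^ 2 := by nlinarith [norm_nonneg v]
  have h2 : ‖v‖ ^ 2 ≤ (1 + ‖v‖) ^ 2 := by nlinarith [norm_nonneg v]
  calc gaussianKernel σ v / σ ^ 2 * ‖innerSL ℝ e - (⟪v, e⟫ / σ ^ 2) • innerSL ℝ v‖
      ≤ gaussianKernel σ v / σ ^ 2 * (‖e‖ + ‖v‖ * ‖e‖ / σ ^ 2 * ‖v‖) := by gcongr
    _ = ‖e‖ / σ ^ 2 * (1 + (σ ^ 2)⁻¹ * ‖v‖ ^ 2) * gaussianKernel σ v := by ring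
    _ ≤ ‖e‖ / σ ^ 2 * ((1 + (σ ^ 2)⁻¹) * (1 + ‖v‖) ^ 2) * gaussianKernel σ v := by
        gcongr
        nlinarith [inv_nonneg.2 hσ2.le]
    _ = ‖e‖ / σ ^ 2 * (1 + (σ ^ 2)⁻¹) * (1 + ‖v‖) ^ 2 * gaussianKernel σ v := by ring

variable [FiniteDimensional ℝ V] [MeasurableSpace V] [BorelSpace V] {f : V → ℝ} {C : ℝ}

theorem fderiv_integral_mul_gaussianKernel_sub_apply (hf : AEStronglyMeasurable f)
    (hfC : ∀ z, |f z| ≤ C) (hσ : σ ≠ 0) (y e : V) :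
    fderiv ℝ (fun y => ∫ z, f z * gaussianKernel σ (z - y)) y e =
      ∫ z, f z * (⟪z - y, e⟫ / σ ^ 2 * gaussianKernel σ (z - y)) := by
  rw [fderiv_integral_mul_comp_sub_apply hf hfC hasFDerivAt_gaussianKernel
    (((continuous_gaussianKernel σ).div_const _).neg.smul (innerSL ℝ).continuous)
    (hasGaussianDecay_gaussianKernel hσ) (hasGaussianDecay_fderiv_gaussianKernel hσ)]
  congr 1; ext z
  simp only [smul_apply, innerSL_apply_apply, smul_eq_mul]
  ring

theorem fderiv_fderiv_integral_mul_gaussianKernel_sub_apply (hf : AEStronglyMeasurable f)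
    (hfC : ∀ z, |f z| ≤ C) (hσ : σ ≠ 0) (x e e' : V) :
    fderiv ℝ (fun y => fderiv ℝ (fun y => ∫ z, f z * gaussianKernel σ (z - y)) y e) x e' =
      ∫ z, f z * ((⟪z - x, e⟫ * ⟪z - x, e'⟫ / σ ^ 4 - ⟪e, e'⟫ / σ ^ 2) *
        gaussianKernel σ (z - x)) := by
  simp_rw [fderiv_integral_mul_gaussianKernel_sub_apply hf hfC hσ]
  rw [fderiv_integral_mul_comp_sub_apply hf hfC (hasFDerivAt_inner_mul_gaussianKernel e)
    (by unfold gaussianKernel; fun_prop)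
    (hasGaussianDecay_inner_mul_gaussianKernel hσ e)
    (hasGaussianDecay_fderiv_inner_mul_gaussianKernel hσ e)]
  congr 1; ext z
  simp only [smul_apply, sub_apply, innerSL_apply_apply, smul_eq_mul]
  field_simp
  ring

end GaussianKernel

theorem integral_gaussianMeasure_eq_integral_sub (d : ℕ) (σ : ℝ)
    (φ : EuclideanSpace ℝ (Fin d) → ℝ) (x : EuclideanSpace ℝ (Fin d)) :
    ∫ δ, φ δ ∂gaussianMeasure d σ =
      ∫ z, (2 * π * σ ^ 2) ^ (-(d : ℝ) / 2) * gaussianKernel σ (z - x) * φ (z - x) := by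
  rw [gaussianMeasure, integral_withDensity_eq_integral_toReal_smul (by fun_prop)
    (ae_of_all _ fun _ => ENNReal.ofReal_lt_top), ← integral_sub_right_eq_self _ x]
  congr 1; ext z
  rw [ENNReal.toReal_ofReal (by positivity), smul_eq_mul, gaussianKernel]

theorem stein_second_order_mixed_general (d : ℕ) (σ : ℝ) (hσ : 0 < σ)
    (f : EuclideanSpace ℝ (Fin d) → ℝ) (hf : Measurable f)
    (C : ℝ) (hbd : ∀ x, |f x| ≤ C)
    (u : EuclideanSpace ℝ (Fin d) → ℝ)
    (hu : ∀ x, u x = ∫ δ, f (x + δ) ∂(gaussianMeasure d σ)) :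
    ∀ x, ∀ i j : Fin d, i ≠ j →
      fderiv ℝ (fun y => fderiv ℝ u y (EuclideanSpace.single j (1 : ℝ))) x
          (EuclideanSpace.single i (1 : ℝ)) =
        ∫ δ, (δ i * δ j / σ ^ 4) * f (x + δ) ∂(gaussianMeasure d σ) := by
  intro x i j hij
  set c := (2 * π * σ ^ 2) ^ (-(d : ℝ) / 2)
  have hu' : u = fun y => ∫ z, c * f z * gaussianKernel σ (z - y) := by
    funext y
    rw [hu, integral_gaussianMeasure_eq_integral_sub d σ _ y]
    simp only [add_sub_cancel]
    congr 1; ext z; ring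
  have hcf : ∀ z, |c * f z| ≤ |c| * C := fun z => by
    rw [abs_mul]; exact mul_le_mul_of_nonneg_left (hbd z) (abs_nonneg c)
  rw [hu', fderiv_fderiv_integral_mul_gaussianKernel_sub_apply
      (hf.const_mul c).aestronglyMeasurable hcf hσ.ne',
    integral_gaussianMeasure_eq_integral_sub d σ _ x]
  congr 1; ext z
  simp only [EuclideanSpace.inner_single_right, PiLp.sub_apply, ringHom_apply, one_mul, ne_eq, hij,
    not_false_eq_true, PiLp.single_eq_of_ne, mul_zero, zero_div, sub_zero, add_sub_cancel]
  ring

theorem stein_second_order_mixed (d : ℕ) (hd : 0 < d) (σ : ℝ) (hσ : 0 < σ)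
    (f : EuclideanSpace ℝ (Fin d) → ℝ) (hf : Measurable f)
    (C : ℝ) (hbd : ∀ x, |f x| ≤ C)
    (u : EuclideanSpace ℝ (Fin d) → ℝ)
    (hu : ∀ x, u x = ∫ δ, f (x + δ) ∂(gaussianMeasure d σ)) :
    ∀ x, ∀ i j : Fin d, i ≠ j →
      fderiv ℝ (fun y => fderiv ℝ u y (EuclideanSpace.single j (1 : ℝ))) x
          (EuclideanSpace.single i (1 : ℝ)) =
        ∫ δ, (δ i * δ j / σ ^ 4) * f (x + δ) ∂(gaussianMeasure d σ) :=
  stein_second_order_mixed_general d σ hσ f hf C hbd u hu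
end
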